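/- arXiv:1904.05232 — 3 statements merged into one kernel-verified Lean document; each statement's English description precedes it below -/
import Mathlib

section
/- The derivative of G_λ(r) with respect to the smoothing parameter λ is uniformly bounded: |∂G_λ(r)/∂λ| ≤ log D + D·e^{−1} for all λ > 0 and all r ∈ ℝ^D. Consequently, λ ↦ G_λ(r) is Lipschitz on (0,∞) with constant log D + D/e, uniformly in r. -/
/-!
Differentiating `λ ↦ λ log ∑ exp (r d / λ)` gives `H(r / λ)` with
`H x = log ∑ exp xᵢ - (∑ exp xᵢ * xᵢ) / ∑ exp xᵢ`, the entropy of the softmax of `x`.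
`H` is invariant under adding a constant to `x`, so one may assume `max x = 0`. Then
`S = ∑ exp xᵢ ∈ [1, D]` and, since `t eᵗ ≥ -1/e`, `T = ∑ exp xᵢ * xᵢ ∈ [-D/e, 0]`, whence
`0 ≤ log S - T / S ≤ log D + D/e`. The Lipschitz bound is the mean value inequality.
-/

noncomputable def G (D : ℕ) (lam : ℝ) (r : Fin D → ℝ) : ℝ :=
  lam * Real.log (∑ d, Real.exp (r d / lam))

open Real Finset

section SoftmaxEntropy

variable {ι : Type*} [Fintype ι]

noncomputable def softmaxEntropy (x : ι → ℝ) : ℝ :=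
  log (∑ i, exp (x i)) - (∑ i, exp (x i) * x i) / ∑ i, exp (x i)

variable [Nonempty ι]

theorem softmaxEntropy_add_const (x : ι → ℝ) (c : ℝ) :
    softmaxEntropy (fun i => x i + c) = softmaxEntropy x := by
  have hS : 0 < ∑ i, exp (x i) := sum_pos (fun i _ => exp_pos _) univ_nonempty
  have hsum : ∑ i, exp (x i + c) = exp c * ∑ i, exp (x i) := by
    simp only [exp_add, mul_sum, mul_comm]
  have hsum_mul : ∑ i, exp (x i + c) * (x i + c) =
      exp c * (∑ i, exp (x i) * x i + c * ∑ i, exp (x i)) := by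
    simp only [exp_add, mul_sum, ← sum_add_distrib]
    exact sum_congr rfl fun i _ => by ring
  unfold softmaxEntropy
  rw [hsum, hsum_mul, log_mul (exp_ne_zero c) hS.ne', log_exp,
    mul_div_mul_left _ _ (exp_ne_zero c), add_div, mul_div_cancel_right₀ _ hS.ne']
  ring

theorem softmaxEntropy_nonneg_and_le_of_max_eq_zero {x : ι → ℝ} (hx : ∀ i, x i ≤ 0)
    {i₀ : ι} (hi₀ : x i₀ = 0) :
    0 ≤ softmaxEntropy x ∧
      softmaxEntropy x ≤ log (Fintype.card ι) + Fintype.card ι * exp (-1) := by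
  set S := ∑ i, exp (x i)
  set T := ∑ i, exp (x i) * x i
  have hS_pos : 0 < S := sum_pos (fun i _ => exp_pos _) univ_nonempty
  have one_le_S : 1 ≤ S := by
    simpa [hi₀] using single_le_sum (fun i _ => (exp_pos (x i)).le) (mem_univ i₀)
  have S_le_card : S ≤ Fintype.card ι := by
    simpa using sum_le_sum fun i (_ : i ∈ univ) => exp_le_one_iff.mpr (hx i)
  have T_nonpos : T ≤ 0 :=
    sum_nonpos fun i _ => mul_nonpos_of_nonneg_of_nonpos (exp_pos _).le (hx i)
  have neg_T_le : -T ≤ Fintype.card ι * exp (-1) := by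
    simpa [T, ← sum_neg_distrib, mul_comm] using
      sum_le_sum fun i (_ : i ∈ univ) => mul_exp_neg_le_exp_neg_one (-x i)
  have neg_T_div_le : -T / S ≤ -T := div_le_self (neg_nonneg.mpr T_nonpos) one_le_S
  have hlog_le : log S ≤ log (Fintype.card ι) := log_le_log hS_pos S_le_card
  have hT_div : T / S ≤ 0 := div_nonpos_of_nonpos_of_nonneg T_nonpos hS_pos.le
  unfold softmaxEntropy
  rw [neg_div] at neg_T_div_le
  exact ⟨by linarith [log_nonneg one_le_S], by linarith⟩

theorem abs_softmaxEntropy_le (x : ι → ℝ) :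
    |softmaxEntropy x| ≤ log (Fintype.card ι) + Fintype.card ι * exp (-1) := by
  obtain ⟨i₀, hi₀⟩ := Finite.exists_max x
  rw [← softmaxEntropy_add_const x (-x i₀)]
  obtain ⟨h_nonneg, h_le⟩ := softmaxEntropy_nonneg_and_le_of_max_eq_zero
    (x := fun i => x i + -x i₀) (fun i => by linarith [hi₀ i]) (i₀ := i₀) (by ring)
  exact abs_le.mpr ⟨by linarith, h_le⟩

theorem hasDerivAt_mul_log_sum_exp_div (r : ι → ℝ) {lam : ℝ} (hlam : lam ≠ 0) :
    HasDerivAt (fun l => l * log (∑ i, exp (r i / l)))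
      (softmaxEntropy fun i => r i / lam) lam := by
  have hS : 0 < ∑ i, exp (r i / lam) := sum_pos (fun i _ => exp_pos _) univ_nonempty
  have hsum := HasDerivAt.fun_sum (u := univ) fun i _ =>
    ((hasDerivAt_inv hlam).const_mul (r i)).exp
  refine ((hasDerivAt_id' lam).fun_mul (hsum.log hS.ne')).congr_deriv ?_
  rw [softmaxEntropy, one_mul, sub_eq_add_neg, ← neg_div, mul_div_assoc', mul_sum,
    ← sum_neg_distrib]
  congr 2
  refine sum_congr rfl fun i _ => ?_
  field_simp

end SoftmaxEntropy

theorem stmt_6 (D : ℕ) (hD : 0 < D) :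
    (∀ lam : ℝ, 0 < lam → ∀ r : Fin D → ℝ,
      |deriv (fun l => G D l r) lam| ≤ Real.log D + D * Real.exp (-1)) ∧
    (∀ r : Fin D → ℝ, ∀ lam₁ lam₂ : ℝ, 0 < lam₁ → 0 < lam₂ →
      |G D lam₁ r - G D lam₂ r| ≤ (Real.log D + D * Real.exp (-1)) * |lam₁ - lam₂|) := by
  have : Nonempty (Fin D) := Fin.pos_iff_nonempty.mp hD
  have hasDerivAt_G (r : Fin D → ℝ) {lam : ℝ} (hlam : 0 < lam) :
      HasDerivAt (fun l => G D l r) (softmaxEntropy fun d => r d / lam) lam :=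
    hasDerivAt_mul_log_sum_exp_div r hlam.ne'
  have bound (lam : ℝ) (r : Fin D → ℝ) :
      |softmaxEntropy fun d => r d / lam| ≤ log D + D * exp (-1) := by
    simpa using abs_softmaxEntropy_le fun d => r d / lam
  refine ⟨fun lam hlam r => (hasDerivAt_G r hlam).deriv ▸ bound lam r,
    fun r lam₁ lam₂ h₁ h₂ => ?_⟩
  simpa [norm_eq_abs] using (convex_Ioi 0).norm_image_sub_le_of_norm_hasDerivWithin_le
    (fun l hl => (hasDerivAt_G r hl).hasDerivWithinAt) (fun l _ => bound l r) h₂ h₁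
end

section
/- Under the setting of the simulated Bellman operator, the smoothed fixed point V_N(·, λ) and the unsmoothed fixed point V_N(·, 0) (fixed point of the same operator with G_λ replaced by max) satisfy ‖V_N(·,λ) − V_N(·,0)‖_∞ ≤ λ log D / (1 − β). -/
lemma le_G {D : ℕ} (hD : 0 < D) {lam : ℝ} (hlam : 0 < lam) (r : Fin D → ℝ) :
    Finset.univ.sup' ⟨⟨0, hD⟩, Finset.mem_univ _⟩ r ≤ G D lam r := by
  apply Finset.sup'_le
  intro d _
  have h1 : Real.exp (r d / lam) ≤ ∑ d', Real.exp (r d' / lam) :=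
    Finset.single_le_sum (f := fun d' => Real.exp (r d' / lam)) (fun i _ => (Real.exp_pos _).le) (Finset.mem_univ d)
  have h2 : r d / lam ≤ Real.log (∑ d', Real.exp (r d' / lam)) := by
    calc r d / lam = Real.log (Real.exp (r d / lam)) := (Real.log_exp _).symm
    _ ≤ _ := Real.log_le_log (Real.exp_pos _) h1
  have := mul_le_mul_of_nonneg_left h2 hlam.le
  rwa [mul_div_cancel₀ _ hlam.ne'] at this

lemma G_le {D : ℕ} (hD : 0 < D) {lam : ℝ} (hlam : 0 < lam) (r : Fin D → ℝ) :
    G D lam r ≤ Finset.univ.sup' ⟨⟨0, hD⟩, Finset.mem_univ _⟩ r + lam * Real.log D := by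
  set M := Finset.univ.sup' ⟨⟨0, hD⟩, Finset.mem_univ _⟩ r with hM
  have h1 : ∑ d, Real.exp (r d / lam) ≤ D * Real.exp (M / lam) := by
    calc ∑ d, Real.exp (r d / lam) ≤ ∑ _d : Fin D, Real.exp (M / lam) := by
          apply Finset.sum_le_sum
          intro d _
          exact Real.exp_le_exp.2 (div_le_div_of_nonneg_right (Finset.le_sup' r (Finset.mem_univ d)) hlam.le)
      _ = D * Real.exp (M / lam) := by simp [Finset.sum_const, nsmul_eq_mul]
  have hpos : (0:ℝ) < ∑ d, Real.exp (r d / lam) :=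
    Finset.sum_pos (fun i _ => Real.exp_pos _) ⟨⟨0, hD⟩, Finset.mem_univ _⟩
  have h2 : Real.log (∑ d, Real.exp (r d / lam)) ≤ Real.log D + M / lam := by
    calc Real.log (∑ d, Real.exp (r d / lam)) ≤ Real.log (D * Real.exp (M / lam)) :=
          Real.log_le_log hpos h1
      _ = Real.log D + M / lam := by
          rw [Real.log_mul (by positivity) (Real.exp_pos _).ne', Real.log_exp]
  have := mul_le_mul_of_nonneg_left h2 hlam.le
  rw [mul_add, mul_div_cancel₀ _ hlam.ne'] at this
  unfold G
  linarith

theorem stmt_15 {Z : Type*} [Nonempty Z] (N D : ℕ) (hD : 0 < D)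
    (lam β : ℝ) (hlam : 0 < lam) (hβ0 : 0 ≤ β) (hβ1 : β < 1)
    (u : Fin N → Z → Fin D → ℝ) (ζ : Fin N → Z → Z) (w : Fin N → Z → ℝ)
    (hw0 : ∀ i z, 0 ≤ w i z) (hw1 : ∀ z, ∑ i, w i z = 1)
    (Mu : ℝ) (hu : ∀ i z d, |u i z d| ≤ Mu)
    (Vs V0 : Z → Fin D → ℝ)
    (Ms : ℝ) (hVsB : ∀ z d, |Vs z d| ≤ Ms)
    (M0 : ℝ) (hV0B : ∀ z d, |V0 z d| ≤ M0)
    (hVs : ∀ z d, Vs z d =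
      ∑ i, G D lam (fun d' => u i z d' + β * Vs (ζ i z) d') * w i z)
    (hV0 : ∀ z d, V0 z d =
      ∑ i, (Finset.univ.sup' ⟨⟨0, hD⟩, Finset.mem_univ _⟩
        (fun d' => u i z d' + β * V0 (ζ i z) d')) * w i z) :
    ∀ z d, |Vs z d - V0 z d| ≤ lam * Real.log D / (1 - β) := by
  have hlogD : 0 ≤ Real.log D := Real.log_nonneg (by exact_mod_cast hD)
  set A : Set ℝ := {x | ∃ z d, x = |Vs z d - V0 z d|} with hA
  obtain ⟨z0⟩ : Nonempty Z := inferInstance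
  have hAne : A.Nonempty := ⟨_, z0, ⟨0, hD⟩, rfl⟩
  have hAbdd : BddAbove A := by
    refine ⟨Ms + M0, ?_⟩
    rintro x ⟨z, d, rfl⟩
    calc |Vs z d - V0 z d| ≤ |Vs z d| + |V0 z d| := abs_sub _ _
      _ ≤ Ms + M0 := add_le_add (hVsB z d) (hV0B z d)
  set S := sSup A with hS
  have hle : ∀ z d, |Vs z d - V0 z d| ≤ S := fun z d => le_csSup hAbdd ⟨z, d, rfl⟩
  -- key pointwise step
  have key : ∀ z d, |Vs z d - V0 z d| ≤ lam * Real.log D + β * S := by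
    intro z d
    rw [hVs z d, hV0 z d, ← Finset.sum_sub_distrib]
    simp only [← sub_mul]
    have hterm : ∀ i : Fin N,
        |(G D lam (fun d' => u i z d' + β * Vs (ζ i z) d')
          - Finset.univ.sup' ⟨⟨0, hD⟩, Finset.mem_univ _⟩
            (fun d' => u i z d' + β * V0 (ζ i z) d'))| ≤ lam * Real.log D + β * S := by
      intro i
      set rs : Fin D → ℝ := fun d' => u i z d' + β * Vs (ζ i z) d' with hrs
      set r0 : Fin D → ℝ := fun d' => u i z d' + β * V0 (ζ i z) d' with hr0
      have hpt : ∀ d', |rs d' - r0 d'| ≤ β * S := by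
        intro d'
        have : rs d' - r0 d' = β * (Vs (ζ i z) d' - V0 (ζ i z) d') := by
          simp [hrs, hr0]; ring
        rw [this, abs_mul, abs_of_nonneg hβ0]
        exact mul_le_mul_of_nonneg_left (hle _ _) hβ0
      have hsup1 : Finset.univ.sup' ⟨⟨0, hD⟩, Finset.mem_univ _⟩ rs
          ≤ Finset.univ.sup' ⟨⟨0, hD⟩, Finset.mem_univ _⟩ r0 + β * S := by
        apply Finset.sup'_le
        intro d' _
        have := (abs_le.1 (hpt d')).2
        have h2 : r0 d' ≤ Finset.univ.sup' ⟨⟨0, hD⟩, Finset.mem_univ _⟩ r0 :=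
          Finset.le_sup' r0 (Finset.mem_univ d')
        linarith
      have hsup2 : Finset.univ.sup' ⟨⟨0, hD⟩, Finset.mem_univ _⟩ r0
          ≤ Finset.univ.sup' ⟨⟨0, hD⟩, Finset.mem_univ _⟩ rs + β * S := by
        apply Finset.sup'_le
        intro d' _
        have := (abs_le.1 (hpt d')).1
        have h2 : rs d' ≤ Finset.univ.sup' ⟨⟨0, hD⟩, Finset.mem_univ _⟩ rs :=
          Finset.le_sup' rs (Finset.mem_univ d')
        linarith
      have hG1 := le_G hD hlam rs
      have hG2 := G_le hD hlam rs
      rw [abs_le]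
      constructor
      · linarith
      · linarith
    calc |∑ i, (G D lam (fun d' => u i z d' + β * Vs (ζ i z) d')
          - Finset.univ.sup' ⟨⟨0, hD⟩, Finset.mem_univ _⟩
            (fun d' => u i z d' + β * V0 (ζ i z) d')) * w i z|
        ≤ ∑ i, |(G D lam (fun d' => u i z d' + β * Vs (ζ i z) d')
          - Finset.univ.sup' ⟨⟨0, hD⟩, Finset.mem_univ _⟩
            (fun d' => u i z d' + β * V0 (ζ i z) d')) * w i z| :=
          Finset.abs_sum_le_sum_abs _ _
      _ ≤ ∑ i, (lam * Real.log D + β * S) * w i z := by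
          apply Finset.sum_le_sum
          intro i _
          rw [abs_mul, abs_of_nonneg (hw0 i z)]
          exact mul_le_mul_of_nonneg_right (hterm i) (hw0 i z)
      _ = lam * Real.log D + β * S := by
          rw [← Finset.mul_sum, hw1 z, mul_one]
  have hS0 : 0 ≤ S := le_trans (abs_nonneg _) (hle z0 ⟨0, hD⟩)
  have hSle : S ≤ lam * Real.log D + β * S := by
    apply csSup_le hAne
    rintro x ⟨z, d, rfl⟩
    exact key z d
  have hSfin : S ≤ lam * Real.log D / (1 - β) := by
    rw [le_div_iff₀ (by linarith)]
    nlinarith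
  intro z d
  exact le_trans (hle z d) hSfin
end

section
/- Suppose V₀ solves V₀ = Γ(V₀) where Γ(V)(z) = ∑_i E[G_λ(u_i(z) + βV(ζ_i(z)))]·w_i(z) (with deterministic structure as below), and suppose z ↦ u_i(z) and z ↦ w_i(z) are Lipschitz with constants L_u and L_w, ζ_i is Lipschitz with constant 1, and u_i, V are uniformly bounded. Then the fixed point V₀ is Lipschitz continuous in z. -/
lemma G_le_of_le {D : ℕ} (hD : 0 < D) {lam : ℝ} (hlam : 0 < lam) {r s : Fin D → ℝ} {m : ℝ}
    (h : ∀ d, r d ≤ s d + m) : G D lam r ≤ G D lam s + m := by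
  have hne : (Finset.univ : Finset (Fin D)).Nonempty := ⟨⟨0, hD⟩, Finset.mem_univ _⟩
  have hpos : 0 < ∑ d, Real.exp (s d / lam) :=
    Finset.sum_pos (fun d _ => Real.exp_pos _) hne
  have h1 : ∑ d, Real.exp (r d / lam) ≤ Real.exp (m / lam) * ∑ d, Real.exp (s d / lam) := by
    rw [Finset.mul_sum]
    refine Finset.sum_le_sum fun d _ => ?_
    rw [← Real.exp_add, ← add_div]
    exact Real.exp_le_exp.mpr (by gcongr; linarith [h d])
  have h2 : Real.log (∑ d, Real.exp (r d / lam)) ≤ m / lam + Real.log (∑ d, Real.exp (s d / lam)) := by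
    calc Real.log (∑ d, Real.exp (r d / lam))
        ≤ Real.log (Real.exp (m / lam) * ∑ d, Real.exp (s d / lam)) := by
          apply Real.log_le_log (Finset.sum_pos (fun d _ => Real.exp_pos _) hne) h1
      _ = m / lam + Real.log (∑ d, Real.exp (s d / lam)) := by
          rw [Real.log_mul (Real.exp_ne_zero _) (ne_of_gt hpos), Real.log_exp]
  have := mul_le_mul_of_nonneg_left h2 hlam.le
  unfold G
  calc lam * Real.log (∑ d, Real.exp (r d / lam))
      ≤ lam * (m / lam + Real.log (∑ d, Real.exp (s d / lam))) := this
    _ = lam * Real.log (∑ d, Real.exp (s d / lam)) + m := by field_simp; ring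

lemma G_abs_sub {D : ℕ} (hD : 0 < D) {lam : ℝ} (hlam : 0 < lam) {r s : Fin D → ℝ} {m : ℝ}
    (h : ∀ d, |r d - s d| ≤ m) : |G D lam r - G D lam s| ≤ m := by
  rw [abs_sub_le_iff]
  constructor
  · linarith [G_le_of_le hD hlam (r := r) (s := s) (m := m)
      (fun d => by linarith [abs_le.mp (h d) |>.2])]
  · linarith [G_le_of_le hD hlam (r := s) (s := r) (m := m)
      (fun d => by linarith [abs_le.mp (h d) |>.1])]

lemma G_abs_le {D : ℕ} (hD : 0 < D) {lam : ℝ} (hlam : 0 < lam) {r : Fin D → ℝ} {B : ℝ}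
    (h : ∀ d, |r d| ≤ B) : |G D lam r| ≤ B + lam * Real.log D := by
  have h0 : G D lam (fun _ => 0) = lam * Real.log D := by
    simp [G]
  have habs : |G D lam r - G D lam (fun _ => 0)| ≤ B :=
    G_abs_sub hD hlam (fun d => by simpa using h d)
  have hlog : 0 ≤ Real.log D := Real.log_nonneg (by exact_mod_cast hD)
  rw [h0] at habs
  have := abs_le.mp habs
  rw [abs_le]
  constructor
  · linarith [mul_nonneg hlam.le hlog]
  · linarith [mul_nonneg hlam.le hlog]

theorem stmt_19 {Z : Type*} [MetricSpace Z] [CompactSpace Z] [Nonempty Z]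
    (N D : ℕ) (hD : 0 < D) (lam β : ℝ) (hlam : 0 < lam) (hβ0 : 0 ≤ β) (hβ1 : β < 1)
    (u : Fin N → Z → Fin D → ℝ) (ζ : Fin N → Z → Z) (w : Fin N → Z → ℝ)
    (Lu Lw : ℝ)
    (hwLip : ∀ i z₁ z₂, |w i z₁ - w i z₂| ≤ Lw * dist z₁ z₂)
    (hw0 : ∀ i z, 0 ≤ w i z) (hw1' : ∀ i z, w i z ≤ 1)
    (hwsum : ∀ z, ∑ i, w i z = 1)
    (huLip : ∀ i d z₁ z₂, |u i z₁ d - u i z₂ d| ≤ Lu * dist z₁ z₂)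
    (Mu : ℝ) (hu : ∀ i z d, |u i z d| ≤ Mu)
    (hζ : ∀ i z₁ z₂, dist (ζ i z₁) (ζ i z₂) ≤ dist z₁ z₂)
    (V₀ : Z → Fin D → ℝ) (MV : ℝ) (hVB : ∀ z d, |V₀ z d| ≤ MV)
    (hfix : ∀ z d, V₀ z d =
      ∑ i, G D lam (fun d' => u i z d' + β * V₀ (ζ i z) d') * w i z) :
    ∃ L : ℝ, 0 ≤ L ∧ ∀ z₁ z₂ d, |V₀ z₁ d - V₀ z₂ d| ≤ L * dist z₁ z₂ := by
  obtain ⟨z0⟩ := (inferInstance : Nonempty Z)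
  have d0 : Fin D := ⟨0, hD⟩
  have hN : N ≠ 0 := by
    intro h
    have := hwsum z0
    subst h
    simp at this
  have i0 : Fin N := ⟨0, Nat.pos_of_ne_zero hN⟩
  have hMV : 0 ≤ MV := le_trans (abs_nonneg _) (hVB z0 d0)
  have hMu : 0 ≤ Mu := le_trans (abs_nonneg _) (hu i0 z0 d0)
  have hlog : 0 ≤ Real.log D := Real.log_nonneg (by exact_mod_cast hD)
  set Lu' := max Lu 0 with hLu'
  set Lw' := max Lw 0 with hLw'
  have hLu'0 : 0 ≤ Lu' := le_max_right _ _
  have hLw'0 : 0 ≤ Lw' := le_max_right _ _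
  set MG : ℝ := Mu + β * MV + lam * Real.log D with hMGdef
  have hMG : 0 ≤ MG := by positivity
  set A : ℝ := Lu' + N * Lw' * MG with hAdef
  have hA : 0 ≤ A := by positivity
  -- bound on each G term
  have hGbound : ∀ i z, |G D lam (fun d' => u i z d' + β * V₀ (ζ i z) d')| ≤ MG := by
    intro i z
    apply G_abs_le hD hlam
    intro d
    calc |u i z d + β * V₀ (ζ i z) d| ≤ |u i z d| + β * |V₀ (ζ i z) d| := by
          refine le_trans (abs_add_le _ _) ?_
          rw [abs_mul, abs_of_nonneg hβ0]
      _ ≤ Mu + β * MV := by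
          have := hu i z d
          have := hVB (ζ i z) d
          nlinarith
  -- main induction
  have key : ∀ n : ℕ, ∀ z₁ z₂ : Z, ∀ d : Fin D,
      |V₀ z₁ d - V₀ z₂ d| ≤ A * (∑ k ∈ Finset.range n, β ^ k) * dist z₁ z₂ + β ^ n * (2 * MV) := by
    intro n
    induction n with
    | zero =>
      intro z₁ z₂ d
      simp only [Finset.range_zero, Finset.sum_empty, mul_zero, zero_mul, pow_zero, one_mul,
        zero_add]
      calc |V₀ z₁ d - V₀ z₂ d| ≤ |V₀ z₁ d| + |V₀ z₂ d| := abs_sub _ _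
        _ ≤ 2 * MV := by linarith [hVB z₁ d, hVB z₂ d]
    | succ n ih =>
      intro z₁ z₂ d
      set S := ∑ k ∈ Finset.range n, β ^ k with hS
      have hS0 : 0 ≤ S := Finset.sum_nonneg fun k _ => pow_nonneg hβ0 k
      set t := dist z₁ z₂ with ht
      have ht0 : 0 ≤ t := dist_nonneg
      set m : ℝ := Lu' * t + β * (A * S * t + β ^ n * (2 * MV)) with hm
      have hm0 : 0 ≤ m := by positivity
      -- bound on G difference
      have hGdiff : ∀ i : Fin N,
          |G D lam (fun d' => u i z₁ d' + β * V₀ (ζ i z₁) d')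
            - G D lam (fun d' => u i z₂ d' + β * V₀ (ζ i z₂) d')| ≤ m := by
        intro i
        apply G_abs_sub hD hlam
        intro d'
        have h1 : |u i z₁ d' - u i z₂ d'| ≤ Lu' * t := le_trans (huLip i d' z₁ z₂)
          (by apply mul_le_mul_of_nonneg_right (le_max_left _ _) ht0)
        have h2 : |V₀ (ζ i z₁) d' - V₀ (ζ i z₂) d'| ≤ A * S * t + β ^ n * (2 * MV) := by
          calc |V₀ (ζ i z₁) d' - V₀ (ζ i z₂) d'|
              ≤ A * S * dist (ζ i z₁) (ζ i z₂) + β ^ n * (2 * MV) := ih _ _ _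
            _ ≤ A * S * t + β ^ n * (2 * MV) := by
                have := hζ i z₁ z₂
                nlinarith [mul_nonneg hA hS0]
        calc |u i z₁ d' + β * V₀ (ζ i z₁) d' - (u i z₂ d' + β * V₀ (ζ i z₂) d')|
            = |(u i z₁ d' - u i z₂ d') + β * (V₀ (ζ i z₁) d' - V₀ (ζ i z₂) d')| := by ring_nf
          _ ≤ |u i z₁ d' - u i z₂ d'| + β * |V₀ (ζ i z₁) d' - V₀ (ζ i z₂) d'| := by
              refine le_trans (abs_add_le _ _) ?_
              rw [abs_mul, abs_of_nonneg hβ0]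
          _ ≤ m := by rw [hm]; nlinarith
      -- term-wise bound
      have hterm : ∀ i : Fin N,
          |G D lam (fun d' => u i z₁ d' + β * V₀ (ζ i z₁) d') * w i z₁
            - G D lam (fun d' => u i z₂ d' + β * V₀ (ζ i z₂) d') * w i z₂|
            ≤ m * w i z₁ + MG * (Lw' * t) := by
        intro i
        set G₁ := G D lam (fun d' => u i z₁ d' + β * V₀ (ζ i z₁) d')
        set G₂ := G D lam (fun d' => u i z₂ d' + β * V₀ (ζ i z₂) d')
        have hw : |w i z₁ - w i z₂| ≤ Lw' * t := le_trans (hwLip i z₁ z₂)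
          (by apply mul_le_mul_of_nonneg_right (le_max_left _ _) ht0)
        calc |G₁ * w i z₁ - G₂ * w i z₂|
            = |(G₁ - G₂) * w i z₁ + G₂ * (w i z₁ - w i z₂)| := by ring_nf
          _ ≤ |G₁ - G₂| * |w i z₁| + |G₂| * |w i z₁ - w i z₂| := by
              refine le_trans (abs_add_le _ _) ?_
              rw [abs_mul, abs_mul]
          _ ≤ m * w i z₁ + MG * (Lw' * t) := by
              have h1 := hGdiff i
              have h2 := hGbound i z₂
              have h3 : |w i z₁| = w i z₁ := abs_of_nonneg (hw0 i z₁)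
              rw [h3]
              have := hw0 i z₁
              nlinarith [abs_nonneg (G₁ - G₂), abs_nonneg (w i z₁ - w i z₂)]
      calc |V₀ z₁ d - V₀ z₂ d|
          = |∑ i, (G D lam (fun d' => u i z₁ d' + β * V₀ (ζ i z₁) d') * w i z₁
              - G D lam (fun d' => u i z₂ d' + β * V₀ (ζ i z₂) d') * w i z₂)| := by
            rw [hfix z₁ d, hfix z₂ d, ← Finset.sum_sub_distrib]
        _ ≤ ∑ i, |G D lam (fun d' => u i z₁ d' + β * V₀ (ζ i z₁) d') * w i z₁
              - G D lam (fun d' => u i z₂ d' + β * V₀ (ζ i z₂) d') * w i z₂| :=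
            Finset.abs_sum_le_sum_abs _ _
        _ ≤ ∑ i, (m * w i z₁ + MG * (Lw' * t)) := Finset.sum_le_sum fun i _ => hterm i
        _ = m * 1 + N * (MG * (Lw' * t)) := by
            rw [Finset.sum_add_distrib, ← Finset.mul_sum, hwsum z₁]
            simp [Finset.sum_const]
        _ = A * (∑ k ∈ Finset.range (n + 1), β ^ k) * t + β ^ (n + 1) * (2 * MV) := by
            rw [geom_sum_succ]
            rw [hm, hAdef, ← hS]
            ring
  -- pass to the limit
  refine ⟨A / (1 - β), div_nonneg hA (by linarith), fun z₁ z₂ d => ?_⟩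
  have hβ' : 0 < 1 - β := by linarith
  have hSle : ∀ n : ℕ, (∑ k ∈ Finset.range n, β ^ k) ≤ 1 / (1 - β) := by
    intro n
    rw [le_div_iff₀ hβ']
    have := geom_sum_mul (x := β) n
    have hpow : 0 ≤ β ^ n := pow_nonneg hβ0 n
    nlinarith
  have hbound : ∀ n : ℕ, |V₀ z₁ d - V₀ z₂ d| ≤ A / (1 - β) * dist z₁ z₂ + β ^ n * (2 * MV) := by
    intro n
    refine le_trans (key n z₁ z₂ d) ?_
    have h1 : A * (∑ k ∈ Finset.range n, β ^ k) ≤ A * (1 / (1 - β)) :=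
      mul_le_mul_of_nonneg_left (hSle n) hA
    have h2 : A * (∑ k ∈ Finset.range n, β ^ k) * dist z₁ z₂ ≤ A * (1 / (1 - β)) * dist z₁ z₂ :=
      mul_le_mul_of_nonneg_right h1 dist_nonneg
    have h3 : A * (1 / (1 - β)) * dist z₁ z₂ = A / (1 - β) * dist z₁ z₂ := by ring
    linarith
  have hlim : Filter.Tendsto (fun n : ℕ => A / (1 - β) * dist z₁ z₂ + β ^ n * (2 * MV))
      Filter.atTop (nhds (A / (1 - β) * dist z₁ z₂)) := by
    have h1 : Filter.Tendsto (fun n : ℕ => β ^ n) Filter.atTop (nhds 0) :=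
      tendsto_pow_atTop_nhds_zero_of_lt_one hβ0 hβ1
    have h2 := (h1.mul_const (2 * MV)).const_add (A / (1 - β) * dist z₁ z₂)
    rw [zero_mul, add_zero] at h2
    exact h2
  exact ge_of_tendsto' hlim hbound
end
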